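/- Let p be a prime and suppose a sequence of polynomials P_n ∈ Z_p[x] with deg P_n < p^n satisfies P_{n+2} ≡ -ξ_{n+1}·P_n (mod ω_{n+1}(x)) for all n (the case a_p = 0). If P_n ≠ 0 and μ(P_n) ≤ μ(P_{n+2}), then μ(P_{n+2}) = μ(P_n) and λ(P_{n+2}) = λ(P_n) + p^n(p-1). -/

import Mathlib

open Polynomial PowerSeries

/-- `ω_n(x) = (1+x)^(p^n) - 1 ∈ ℤ_p[x]`. -/
noncomputable def omegaPoly (p : ℕ) [Fact p.Prime] (n : ℕ) : Polynomial ℤ_[p] :=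
  (Polynomial.X + 1) ^ (p ^ n) - 1

/-- `ξ_n(x) = ω_n/ω_{n-1} = Σ_{i=0}^{p-1} (1+x)^(i·p^(n-1)) ∈ ℤ_p[x]`. -/
noncomputable def xiPoly (p : ℕ) [Fact p.Prime] (n : ℕ) : Polynomial ℤ_[p] :=
  ∑ i ∈ Finset.range p, (Polynomial.X + 1) ^ (i * p ^ (n - 1))

/-- Weierstrass decomposition `F = u · p^μ · (X^λ + p·R)`, `u ∈ ℤ_p⟦X⟧ˣ`, `deg R < λ`. -/
def IsWeier (p : ℕ) [Fact p.Prime] (F : PowerSeries ℤ_[p]) (μ lam : ℕ) : Prop :=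
  ∃ (u : (PowerSeries ℤ_[p])ˣ) (R : Polynomial ℤ_[p]), R.degree < (lam : ℕ) ∧
    F = (u : PowerSeries ℤ_[p]) *
      ((p : PowerSeries ℤ_[p]) ^ μ *
        (PowerSeries.X ^ lam + (p : PowerSeries ℤ_[p]) * (R : PowerSeries ℤ_[p])))

variable {p : ℕ} [Fact p.Prime]

lemma PadicAux.dvd_iff_toZMod {x : ℤ_[p]} : (p:ℤ_[p]) ∣ x ↔ PadicInt.toZMod x = 0 := by
  have h : x ∈ RingHom.ker (PadicInt.toZMod : ℤ_[p] →+* ZMod p) ↔ PadicInt.toZMod x = 0 :=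
    RingHom.mem_ker
  rw [← h, PadicInt.ker_toZMod, PadicInt.maximalIdeal_eq_span_p, Ideal.mem_span_singleton]

lemma PadicAux.natCast_powerSeries :
    (p : PowerSeries ℤ_[p]) = PowerSeries.C (R := ℤ_[p]) (p:ℤ_[p]) := (map_natCast (PowerSeries.C (R := ℤ_[p])) p).symm

lemma pow_sub_one_aux (n : ℕ) (hp : 1 ≤ p) : p ^ n * (p - 1) + p ^ n = p ^ (n+1) := by
  have h : (p - 1) + 1 = p := Nat.sub_add_cancel hp
  calc p ^ n * (p - 1) + p ^ n = p ^ n * ((p - 1) + 1) := by ring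
    _ = p ^ (n+1) := by rw [h, pow_succ]

lemma map_omega (m : ℕ) :
    (omegaPoly p m).map (PadicInt.toZMod) = Polynomial.X ^ (p ^ m) := by
  simp only [omegaPoly, Polynomial.map_sub, Polynomial.map_pow, Polynomial.map_add,
    Polynomial.map_X, Polynomial.map_one]
  rw [add_pow_char_pow]
  simp

lemma map_xi (n : ℕ) :
    (xiPoly p (n+1)).map (PadicInt.toZMod) = Polynomial.X ^ (p ^ n * (p - 1)) := by
  have hp : p.Prime := Fact.out
  have hX : (Polynomial.X : Polynomial (ZMod p)) ^ (p ^ n) ≠ 0 := pow_ne_zero _ X_ne_zero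
  apply mul_right_cancel₀ hX
  have hmap : (xiPoly p (n+1)).map (PadicInt.toZMod)
      = ∑ i ∈ Finset.range p, ((Polynomial.X : Polynomial (ZMod p)) ^ (p ^ n) + 1) ^ i := by
    simp only [xiPoly, Polynomial.map_sum, Polynomial.map_pow, Polynomial.map_add,
      Polynomial.map_X, Polynomial.map_one, Nat.add_sub_cancel]
    refine Finset.sum_congr rfl fun i _ => ?_
    rw [mul_comm i, pow_mul, add_pow_char_pow, one_pow]
  rw [hmap]
  have hgeom := geom_sum_mul ((Polynomial.X : Polynomial (ZMod p)) ^ (p ^ n) + 1) p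
  simp only [add_sub_cancel_right] at hgeom
  rw [hgeom, add_pow_char, one_pow, add_sub_cancel_right, ← pow_mul, ← pow_add,
    pow_sub_one_aux n hp.one_le, pow_mul, pow_succ, pow_mul]

lemma xp1_monic (m : ℕ) : ((Polynomial.X + 1 : Polynomial ℤ_[p]) ^ m).Monic := by
  have : (Polynomial.X + 1 : Polynomial ℤ_[p]) = Polynomial.X + Polynomial.C 1 := by simp
  rw [this]; exact (monic_X_add_C 1).pow m

lemma xp1_degree (m : ℕ) : ((Polynomial.X + 1 : Polynomial ℤ_[p]) ^ m).degree = m := by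
  have : (Polynomial.X + 1 : Polynomial ℤ_[p]) = Polynomial.X + Polynomial.C 1 := by simp
  rw [this, degree_pow, degree_X_add_C]
  simp

lemma xi_monic (n : ℕ) : (xiPoly p (n+1)).Monic ∧ (xiPoly p (n+1)).degree = (p ^ n * (p-1) : ℕ) := by
  have hp : p.Prime := Fact.out
  have hrw : xiPoly p (n+1) = (∑ i ∈ Finset.range (p-1), (Polynomial.X + 1 : Polynomial ℤ_[p]) ^ (i * p ^ n))
      + (Polynomial.X + 1) ^ ((p-1) * p ^ n) := by
    have hr : Finset.range p = Finset.range ((p-1)+1) := by rw [Nat.sub_add_cancel hp.one_le]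
    rw [xiPoly, Nat.add_sub_cancel, hr, Finset.sum_range_succ]
  have hlt : (∑ i ∈ Finset.range (p-1), (Polynomial.X + 1 : Polynomial ℤ_[p]) ^ (i * p ^ n)).degree
      < ((p-1) * p ^ n : ℕ) := by
    refine lt_of_le_of_lt (degree_sum_le _ _) ?_
    rw [Finset.sup_lt_iff (by exact_mod_cast WithBot.bot_lt_coe _)]
    intro i hi
    rw [xp1_degree]
    exact_mod_cast (Nat.mul_lt_mul_right (pow_pos hp.pos n)).mpr (Finset.mem_range.mp hi)
  constructor
  · rw [hrw]
    exact (xp1_monic _).add_of_right (by rw [xp1_degree]; exact_mod_cast hlt)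
  · rw [hrw, degree_add_eq_right_of_degree_lt (by rwa [xp1_degree]), xp1_degree, mul_comm]

lemma xi_decomp (n : ℕ) : ∃ S : Polynomial ℤ_[p], S.degree < ((p ^ n * (p-1) : ℕ) : WithBot ℕ) ∧
    xiPoly p (n+1) = Polynomial.X ^ (p ^ n * (p-1)) + Polynomial.C (p:ℤ_[p]) * S := by
  have hp : p.Prime := Fact.out
  obtain ⟨hmon, hdeg⟩ := xi_monic (p := p) n
  set L := p ^ n * (p-1) with hL
  have hdvd : Polynomial.C (p:ℤ_[p]) ∣ (xiPoly p (n+1) - Polynomial.X ^ L) := by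
    rw [Polynomial.C_dvd_iff_dvd_coeff]
    intro i
    rw [PadicAux.dvd_iff_toZMod]
    have : (xiPoly p (n+1) - Polynomial.X ^ L).map PadicInt.toZMod = 0 := by
      rw [Polynomial.map_sub, map_xi, Polynomial.map_pow, Polynomial.map_X, sub_self]
    rw [← Polynomial.coeff_map, this, Polynomial.coeff_zero]
  obtain ⟨S, hS⟩ := hdvd
  have hdegsub : (xiPoly p (n+1) - Polynomial.X ^ L).degree < ((L : ℕ) : WithBot ℕ) := by
    have h1 : (Polynomial.X ^ L : Polynomial ℤ_[p]).degree = (L : ℕ) := degree_X_pow L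
    rcases eq_or_ne (xiPoly p (n+1)) (Polynomial.X ^ L) with h | h
    · rw [h, sub_self, degree_zero]; exact_mod_cast WithBot.bot_lt_coe _
    · have := Polynomial.degree_sub_lt (hdeg.trans h1.symm) hmon.ne_zero
        (by rw [hmon.leadingCoeff, (monic_X_pow L).leadingCoeff])
      rwa [hdeg] at this
  refine ⟨S, ?_, by rw [← hS]; ring⟩
  rcases eq_or_ne S 0 with rfl | hS0
  · rw [degree_zero]; exact_mod_cast WithBot.bot_lt_coe _
  · have : (Polynomial.C (p:ℤ_[p]) * S).degree = S.degree := by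
      rw [degree_mul, degree_C (by exact_mod_cast hp.ne_zero : (p:ℤ_[p]) ≠ 0), zero_add]
    rw [← this, ← hS]; exact hdegsub

lemma isWeier_neg {F : PowerSeries ℤ_[p]} {μ l : ℕ} (h : IsWeier p F μ l) : IsWeier p (-F) μ l := by
  obtain ⟨u, R, hR, hF⟩ := h
  exact ⟨-u, R, hR, by rw [hF]; push_cast; ring⟩

lemma isWeier_mul {F G : PowerSeries ℤ_[p]} {μ₁ l₁ μ₂ l₂ : ℕ}
    (h₁ : IsWeier p F μ₁ l₁) (h₂ : IsWeier p G μ₂ l₂) :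
    IsWeier p (F * G) (μ₁ + μ₂) (l₁ + l₂) := by
  obtain ⟨u, R, hR, hF⟩ := h₁
  obtain ⟨v, S, hS, hG⟩ := h₂
  refine ⟨u * v, R * Polynomial.X ^ l₂ + Polynomial.X ^ l₁ * S + Polynomial.C (p:ℤ_[p]) * (R * S),
    ?_, ?_⟩
  · rw [Polynomial.degree_lt_iff_coeff_zero]
    intro m hm
    have hm' : (l₁ + l₂ : ℕ) ≤ m := by exact_mod_cast hm
    have hRc : ∀ j : ℕ, l₁ ≤ j → R.coeff j = 0 := fun j hj =>
      Polynomial.coeff_eq_zero_of_degree_lt (hR.trans_le (by exact_mod_cast hj))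
    have hSc : ∀ j : ℕ, l₂ ≤ j → S.coeff j = 0 := fun j hj =>
      Polynomial.coeff_eq_zero_of_degree_lt (hS.trans_le (by exact_mod_cast hj))
    have hRS : (R * S).coeff m = 0 := by
      rw [Polynomial.coeff_mul]
      refine Finset.sum_eq_zero fun x hx => ?_
      have hxm := Finset.HasAntidiagonal.mem_antidiagonal.mp hx
      by_cases hc : l₁ ≤ x.1
      · rw [hRc _ hc, zero_mul]
      · rw [hSc x.2 (by omega), mul_zero]
    rw [Polynomial.coeff_add, Polynomial.coeff_add, Polynomial.coeff_mul_X_pow',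
      Polynomial.coeff_C_mul, hRS, mul_comm (Polynomial.X ^ l₁) S, Polynomial.coeff_mul_X_pow']
    rw [if_pos (by omega : l₂ ≤ m), if_pos (by omega : l₁ ≤ m), hRc _ (by omega),
      hSc _ (by omega)]
    ring
  · rw [hF, hG]
    push_cast
    rw [← PadicAux.natCast_powerSeries]
    ring

lemma xi_isWeier (n : ℕ) :
    IsWeier p ((xiPoly p (n+1) : Polynomial ℤ_[p]) : PowerSeries ℤ_[p]) 0 (p ^ n * (p-1)) := by
  obtain ⟨S, hS, hxi⟩ := xi_decomp (p := p) n
  refine ⟨1, S, hS, ?_⟩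
  rw [hxi]
  push_cast
  rw [← PadicAux.natCast_powerSeries]
  ring

lemma isWeier_coeff {F : PowerSeries ℤ_[p]} {μ l : ℕ} (h : IsWeier p F μ l) :
    (∀ i, (p:ℤ_[p]) ^ μ ∣ PowerSeries.coeff (R := ℤ_[p]) i F)
    ∧ (∀ i < l, (p:ℤ_[p]) ^ (μ+1) ∣ PowerSeries.coeff (R := ℤ_[p]) i F)
    ∧ ¬ (p:ℤ_[p]) ^ (μ+1) ∣ PowerSeries.coeff (R := ℤ_[p]) l F := by
  have hp : p.Prime := Fact.out
  obtain ⟨u, R, hR, hF⟩ := h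
  set D : PowerSeries ℤ_[p] :=
    (p : PowerSeries ℤ_[p]) ^ μ * (PowerSeries.X ^ l + (p : PowerSeries ℤ_[p]) * (R : PowerSeries ℤ_[p])) with hDdef
  have hD : ∀ k, PowerSeries.coeff (R := ℤ_[p]) k D
      = (p:ℤ_[p]) ^ μ * ((if k = l then 1 else 0) + (p:ℤ_[p]) * R.coeff k) := by
    intro k
    rw [hDdef, PadicAux.natCast_powerSeries, ← map_pow, PowerSeries.coeff_C_mul, map_add,
      PowerSeries.coeff_X_pow, PowerSeries.coeff_C_mul, Polynomial.coeff_coe]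
  have hcoeff : ∀ k, PowerSeries.coeff (R := ℤ_[p]) k F
      = ∑ x ∈ Finset.HasAntidiagonal.antidiagonal k, PowerSeries.coeff (R := ℤ_[p]) x.1 (u : PowerSeries ℤ_[p]) * PowerSeries.coeff (R := ℤ_[p]) x.2 D := by
    intro k; rw [hF, PowerSeries.coeff_mul]
  have hDdvd : ∀ k, (p:ℤ_[p]) ^ μ ∣ PowerSeries.coeff (R := ℤ_[p]) k D := fun k => by
    rw [hD]; exact dvd_mul_right _ _
  have hDdvd' : ∀ k < l, (p:ℤ_[p]) ^ (μ+1) ∣ PowerSeries.coeff (R := ℤ_[p]) k D := by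
    intro k hk
    rw [hD, if_neg hk.ne, zero_add]
    exact ⟨R.coeff k, by ring⟩
  refine ⟨?_, ?_, ?_⟩
  · intro i
    rw [hcoeff]
    exact Finset.dvd_sum fun x _ => dvd_mul_of_dvd_right (hDdvd x.2) _
  · intro i hi
    rw [hcoeff]
    refine Finset.dvd_sum fun x hx => ?_
    have := Finset.HasAntidiagonal.mem_antidiagonal.mp hx
    exact dvd_mul_of_dvd_right (hDdvd' x.2 (by omega)) _
  · intro hdvd
    rw [hcoeff] at hdvd
    have hmem : (0, l) ∈ Finset.HasAntidiagonal.antidiagonal l := by simp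
    rw [← Finset.add_sum_erase _ _ hmem] at hdvd
    have hrest : (p:ℤ_[p]) ^ (μ+1) ∣
        ∑ x ∈ (Finset.HasAntidiagonal.antidiagonal l).erase (0, l),
          PowerSeries.coeff (R := ℤ_[p]) x.1 (u : PowerSeries ℤ_[p]) * PowerSeries.coeff (R := ℤ_[p]) x.2 D := by
      refine Finset.dvd_sum fun x hx => ?_
      obtain ⟨hne, hx'⟩ := Finset.mem_erase.mp hx
      have hsum := Finset.HasAntidiagonal.mem_antidiagonal.mp hx'
      have hx2 : x.2 < l := by
        rcases Nat.lt_or_ge x.2 l with h | h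
        · exact h
        · exfalso; apply hne
          have : x.2 = l := by omega
          have : x.1 = 0 := by omega
          exact Prod.ext this ‹x.2 = l›
      exact dvd_mul_of_dvd_right (hDdvd' x.2 hx2) _
    have hu0 : (p:ℤ_[p]) ^ (μ+1) ∣
        PowerSeries.coeff (R := ℤ_[p]) 0 (u : PowerSeries ℤ_[p]) * PowerSeries.coeff (R := ℤ_[p]) l D := by
      have := dvd_sub hdvd hrest
      rwa [add_sub_cancel_right] at this
    have hDl : PowerSeries.coeff (R := ℤ_[p]) l D = (p:ℤ_[p]) ^ μ := by
      rw [hD, if_pos rfl, Polynomial.coeff_eq_zero_of_degree_lt hR, mul_zero, add_zero, mul_one]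
    rw [hDl, pow_succ] at hu0
    have hp0 : ((p:ℤ_[p]) ^ μ) ≠ 0 := pow_ne_zero _ (by exact_mod_cast hp.ne_zero)
    have hpdvd : (p:ℤ_[p]) ∣ PowerSeries.coeff (R := ℤ_[p]) 0 (u : PowerSeries ℤ_[p]) := by
      have h2 : (p:ℤ_[p]) ^ μ * (p:ℤ_[p]) ∣ (p:ℤ_[p]) ^ μ * PowerSeries.coeff (R := ℤ_[p]) 0 (u : PowerSeries ℤ_[p]) := by
        rw [mul_comm ((p:ℤ_[p]) ^ μ) (PowerSeries.coeff (R := ℤ_[p]) 0 (u : PowerSeries ℤ_[p]))]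
        exact hu0
      exact (mul_dvd_mul_iff_left hp0).mp h2
    have huu : IsUnit (PowerSeries.coeff (R := ℤ_[p]) 0 (u : PowerSeries ℤ_[p])) := by
      rw [PowerSeries.coeff_zero_eq_constantCoeff]
      exact u.isUnit.map (PowerSeries.constantCoeff (R := ℤ_[p]))
    exact PadicInt.prime_p.not_unit (isUnit_of_dvd_unit hpdvd huu)

lemma omega_coeff_dvd (m : ℕ) : ∀ j < p ^ m, (p:ℤ_[p]) ∣ (omegaPoly p m).coeff j := by
  intro j hj
  rw [PadicAux.dvd_iff_toZMod]
  have : PadicInt.toZMod ((omegaPoly p m).coeff j)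
      = ((omegaPoly p m).map PadicInt.toZMod).coeff j := (Polynomial.coeff_map _ _).symm
  rw [this, map_omega, Polynomial.coeff_X_pow, if_neg hj.ne]

lemma dvd_of_dvd_omega_mul {m k : ℕ} {Q : Polynomial ℤ_[p]}
    (h : Polynomial.C ((p:ℤ_[p]) ^ k) ∣ omegaPoly p m * Q) :
    ∀ i, (p:ℤ_[p]) ^ k ∣ Q.coeff i := by
  have hprime : Prime (Polynomial.C (p:ℤ_[p])) := Polynomial.prime_C_iff.mpr PadicInt.prime_p
  have hnot : ¬ Polynomial.C (p:ℤ_[p]) ∣ omegaPoly p m := by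
    intro hd
    obtain ⟨T, hT⟩ := hd
    have : (omegaPoly p m).map PadicInt.toZMod = 0 := by
      rw [hT, Polynomial.map_mul, Polynomial.map_C]
      have : PadicInt.toZMod (p:ℤ_[p]) = 0 := by
        rw [← PadicAux.dvd_iff_toZMod]
      rw [this]; simp
    rw [map_omega] at this
    exact pow_ne_zero _ Polynomial.X_ne_zero this
  have h' : (Polynomial.C (p:ℤ_[p])) ^ k ∣ omegaPoly p m * Q := by
    rwa [← map_pow]
  have := hprime.pow_dvd_of_dvd_mul_left k hnot h'
  rw [← map_pow, Polynomial.C_dvd_iff_dvd_coeff] at this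
  intro i
  simpa using this i


/-- (case `a_p = 0`) Suppose `P_n ∈ ℤ_p[x]`, `deg P_n < p^n`, satisfy
`P_{n+2} ≡ -ξ_{n+1}·P_n (mod ω_{n+1}(x))` for all `n`. If `P_n ≠ 0` and
`μ(P_n) ≤ μ(P_{n+2})`, then `μ(P_{n+2}) = μ(P_n)` and `λ(P_{n+2}) = λ(P_n) + p^n(p-1)`. -/
theorem mu_lambda_recurrence
    (p : ℕ) [Fact p.Prime]
    (P : ℕ → Polynomial ℤ_[p])
    (hdeg : ∀ n, (P n).degree < ((p ^ n : ℕ) : WithBot ℕ))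
    (hrec : ∀ n, omegaPoly p (n + 1) ∣ (P (n + 2) + xiPoly p (n + 1) * P n))
    (n : ℕ) (hPn : P n ≠ 0) (hPn2 : P (n + 2) ≠ 0)
    (μ₀ lam₀ μ₂ lam₂ : ℕ)
    (h₀ : IsWeier p ((P n : Polynomial ℤ_[p]) : PowerSeries ℤ_[p]) μ₀ lam₀)
    (h₂ : IsWeier p ((P (n + 2) : Polynomial ℤ_[p]) : PowerSeries ℤ_[p]) μ₂ lam₂)
    (hμ : μ₀ ≤ μ₂) :
    μ₂ = μ₀ ∧ lam₂ = lam₀ + p ^ n * (p - 1) := by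
  have hp : p.Prime := Fact.out
  set L := lam₀ + p ^ n * (p - 1) with hLdef
  have hG : IsWeier p ((xiPoly p (n+1) * P n : Polynomial ℤ_[p]) : PowerSeries ℤ_[p]) μ₀ L := by
    have h := isWeier_mul h₀ (xi_isWeier n)
    rw [Nat.add_zero] at h
    rwa [Polynomial.coe_mul, mul_comm]
  obtain ⟨Fa, Fb, Fc⟩ := isWeier_coeff h₂
  obtain ⟨Ga, Gb, Gc⟩ := isWeier_coeff hG
  obtain ⟨Pa, Pb, Pc⟩ := isWeier_coeff h₀
  have hlam0 : lam₀ < p ^ n := by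
    by_contra hge
    push_neg at hge
    have h0 : (P n).coeff lam₀ = 0 :=
      Polynomial.coeff_eq_zero_of_degree_lt ((hdeg n).trans_le (by exact_mod_cast hge))
    exact Pc (by rw [Polynomial.coeff_coe, h0]; exact dvd_zero _)
  have hLp : L < p ^ (n+1) := by
    have := pow_sub_one_aux (p := p) n hp.one_le
    omega
  obtain ⟨Q, hQ⟩ := hrec n
  have key : ∀ i, (P (n+2)).coeff i
      = (omegaPoly p (n+1) * Q).coeff i - (xiPoly p (n+1) * P n).coeff i := by
    intro i
    rw [← hQ, Polynomial.coeff_add]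
    ring
  have hQdvd : ∀ i, (p:ℤ_[p]) ^ μ₀ ∣ Q.coeff i := by
    apply dvd_of_dvd_omega_mul (m := n+1)
    rw [Polynomial.C_dvd_iff_dvd_coeff]
    intro i
    rw [← hQ, Polynomial.coeff_add]
    refine dvd_add ?_ ?_
    · exact (pow_dvd_pow _ hμ).trans (by rw [← Polynomial.coeff_coe]; exact Fa i)
    · rw [← Polynomial.coeff_coe]; exact Ga i
  have hH : ∀ i < p ^ (n+1), (p:ℤ_[p]) ^ (μ₀+1) ∣ (omegaPoly p (n+1) * Q).coeff i := by
    intro i hi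
    rw [Polynomial.coeff_mul]
    refine Finset.dvd_sum fun x hx => ?_
    have hxs := Finset.HasAntidiagonal.mem_antidiagonal.mp hx
    have h1 : (p:ℤ_[p]) ∣ (omegaPoly p (n+1)).coeff x.1 :=
      omega_coeff_dvd (n+1) x.1 (by omega)
    rw [pow_succ']
    exact mul_dvd_mul h1 (hQdvd x.2)
  have hnotL : ¬ (p:ℤ_[p]) ^ (μ₀+1) ∣ (P (n+2)).coeff L := by
    intro hd
    apply Gc
    rw [Polynomial.coeff_coe]
    have hk := key L
    have : (xiPoly p (n+1) * P n).coeff L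
        = (omegaPoly p (n+1) * Q).coeff L - (P (n+2)).coeff L := by
      rw [hk]; ring
    rw [this]
    exact dvd_sub (hH L hLp) hd
  have hμeq : μ₂ = μ₀ := by
    refine le_antisymm ?_ hμ
    by_contra hlt
    push_neg at hlt
    exact hnotL ((pow_dvd_pow _ hlt).trans (by rw [← Polynomial.coeff_coe]; exact Fa L))
  refine ⟨hμeq, ?_⟩
  have hle1 : lam₂ ≤ L := by
    by_contra hgt
    push_neg at hgt
    have := Fb L hgt
    rw [Polynomial.coeff_coe, hμeq] at this
    exact hnotL this
  have hle2 : L ≤ lam₂ := by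
    by_contra hgt
    push_neg at hgt
    apply Fc
    rw [Polynomial.coeff_coe, hμeq, key lam₂]
    have h1 := hH lam₂ (hgt.trans hLp)
    have h2 := Gb lam₂ hgt
    rw [Polynomial.coeff_coe] at h2
    exact dvd_sub h1 h2
  omega
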